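/- arXiv:1306.1503 — 2 statements merged into one kernel-verified Lean document; each statement's English description precedes it below -/
import Mathlib

section
/- For a subordinator with Lévy measure Π, for every u > 0, u² σ²(u) / H(u) ≥ e^{-1} / (1 + Π̄(1/u)/K_Π(1/u)), where σ²(u) = ∫ y² e^{-uy} Π(dy), H(u) = ∫(1 - e^{-uy} - uy e^{-uy})Π(dy), Π̄(z) = Π((z,∞)), and K_Π(z) = z^{-2}∫_{(0,z)} y² Π(dy). -/
open MeasureTheory Set

lemma levy_integrableOn {ν : Measure ℝ}
    (hLevy : ∫⁻ y in Ioi (0 : ℝ), ENNReal.ofReal (min 1 y) ∂ν ≠ ⊤)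
    {s : Set ℝ} (hs : MeasurableSet s) (hsub : s ⊆ Ioi (0 : ℝ)) {f : ℝ → ℝ}
    (hf : Measurable f) {C : ℝ} (hC : 0 ≤ C) (h0 : ∀ y ∈ s, 0 ≤ f y)
    (hb : ∀ y ∈ s, f y ≤ C * min 1 y) : IntegrableOn f s ν := by
  refine ⟨hf.aestronglyMeasurable, ?_⟩
  rw [hasFiniteIntegral_iff_ofReal ((ae_restrict_iff' hs).2 (ae_of_all _ h0))]
  have hmmin : Measurable fun y : ℝ => ENNReal.ofReal (min 1 y) :=
    (measurable_const.min measurable_id).ennreal_ofReal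
  have h2 : ∫⁻ y in s, ENNReal.ofReal C * ENNReal.ofReal (min 1 y) ∂ν
      = ENNReal.ofReal C * ∫⁻ y in s, ENNReal.ofReal (min 1 y) ∂ν := by
    exact lintegral_const_mul _ hmmin
  have hmono : ∫⁻ y in s, ENNReal.ofReal (f y) ∂ν
      ≤ ∫⁻ y in s, ENNReal.ofReal C * ENNReal.ofReal (min 1 y) ∂ν := by
    refine setLIntegral_mono (hmmin.const_mul _) fun y hy => ?_
    rw [← ENNReal.ofReal_mul hC]
    exact ENNReal.ofReal_le_ofReal (hb y hy)
  have h3 : ∫⁻ y in s, ENNReal.ofReal (min 1 y) ∂ν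
      ≤ ∫⁻ y in Ioi (0:ℝ), ENNReal.ofReal (min 1 y) ∂ν :=
    lintegral_mono' (Measure.restrict_mono hsub le_rfl) le_rfl
  calc ∫⁻ y in s, ENNReal.ofReal (f y) ∂ν
      ≤ ENNReal.ofReal C * ∫⁻ y in Ioi (0:ℝ), ENNReal.ofReal (min 1 y) ∂ν :=
        hmono.trans (h2.le.trans (mul_le_mul_right h3 _))
    _ < ⊤ := ENNReal.mul_lt_top ENNReal.ofReal_lt_top hLevy.lt_top

/-- For a subordinator with nonzero Lévy measure ν (playing the role of Π), for every u > 0,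
u²σ²(u)/H(u) ≥ e⁻¹/(1 + Π̄(1/u)/K_Π(1/u)), where σ²(u) = ∫ y² e^{-uy} Π(dy),
H(u) = ∫ (1 - e^{-uy} - uy e^{-uy}) Π(dy), Π̄(z) = Π((z,∞)),
K_Π(z) = z⁻² ∫_{(0,z)} y² Π(dy). -/
theorem ratio_lower_bound (ν : Measure ℝ)
    (hsupp : ν (Iic (0 : ℝ)) = 0)
    (hLevy : ∫⁻ y in Ioi (0 : ℝ), ENNReal.ofReal (min 1 y) ∂ν ≠ ⊤)
    (hne : ν (Ioi (0 : ℝ)) ≠ 0) :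
    ∀ u > (0 : ℝ),
      0 < ((1 / u) ^ 2)⁻¹ * ∫ y in Ioo (0 : ℝ) (1 / u), y ^ 2 ∂ν →
      0 < ∫ y in Ioi (0 : ℝ), (1 - Real.exp (-(u * y)) - u * y * Real.exp (-(u * y))) ∂ν →
      Real.exp (-1) /
          (1 + (ν (Ioi (1 / u))).toReal /
            (((1 / u) ^ 2)⁻¹ * ∫ y in Ioo (0 : ℝ) (1 / u), y ^ 2 ∂ν))
        ≤ (u ^ 2 * ∫ y in Ioi (0 : ℝ), y ^ 2 * Real.exp (-(u * y)) ∂ν) /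
            ∫ y in Ioi (0 : ℝ), (1 - Real.exp (-(u * y)) - u * y * Real.exp (-(u * y))) ∂ν := by
  intro u hu hK hH
  have hu0 : u ≠ 0 := ne_of_gt hu
  have hv : (0:ℝ) < 1 / u := by positivity
  set g : ℝ → ℝ := fun y => 1 - Real.exp (-(u * y)) - u * y * Real.exp (-(u * y)) with hg
  set f : ℝ → ℝ := fun y => y ^ 2 * Real.exp (-(u * y)) with hf
  -- pointwise facts
  have hg0 : ∀ y ∈ Ioi (0:ℝ), 0 ≤ g y := by
    intro y hy
    have h1 : (1 : ℝ) + u * y ≤ Real.exp (u * y) := by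
      have := Real.add_one_le_exp (u * y); linarith
    have h2 : Real.exp (-(u*y)) * Real.exp (u*y) = 1 := by
      rw [← Real.exp_add]; simp
    have h3 := Real.exp_pos (-(u*y))
    simp only [hg]
    nlinarith [Real.exp_pos (u*y)]
  have hgsq : ∀ y ∈ Ioi (0:ℝ), g y ≤ (u * y) ^ 2 := by
    intro y hy
    have h1 : (1 : ℝ) + -(u * y) ≤ Real.exp (-(u * y)) := by
      linarith [Real.add_one_le_exp (-(u * y))]
    have hy0 : 0 < y := hy
    simp only [hg]
    nlinarith [mul_pos hu hy0]
  have hg1 : ∀ y ∈ Ioi (0:ℝ), g y ≤ 1 := by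
    intro y hy
    have hy0 : 0 < y := hy
    have h3 := (Real.exp_pos (-(u*y))).le
    simp only [hg]
    nlinarith [mul_pos hu hy0]
  have hf0 : ∀ y ∈ Ioi (0:ℝ), 0 ≤ f y := by
    intro y hy; have := (Real.exp_pos (-(u*y))).le
    simp only [hf]; positivity
  -- integrability of f on Ioi 0
  have hfint : IntegrableOn f (Ioi 0) ν := by
    apply levy_integrableOn hLevy measurableSet_Ioi le_rfl (by fun_prop)
      (le_trans zero_le_one (le_max_left 1 (4 / u ^ 2))) hf0
    intro y hy
    have hy0 : 0 < y := hy
    rcases le_or_gt y 1 with h | h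
    · have hmin : min 1 y = y := min_eq_right h
      rw [hmin]
      have he1 : Real.exp (-(u * y)) ≤ 1 := Real.exp_le_one_iff.2 (by nlinarith)
      have hfy : f y ≤ y := by
        simp only [hf]
        nlinarith [sq_nonneg y, (Real.exp_pos (-(u*y))).le]
      calc f y ≤ y := hfy
        _ = 1 * y := (one_mul y).symm
        _ ≤ max 1 (4 / u ^ 2) * y :=
            mul_le_mul_of_nonneg_right (le_max_left _ _) hy0.le
    · have hmin : min 1 y = 1 := min_eq_left h.le
      rw [hmin, mul_one]
      have h1 : u * y / 2 ≤ Real.exp (u * y / 2) := by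
        have := Real.add_one_le_exp (u * y / 2); linarith
      have h2 : (u*y)^2 ≤ 4 * Real.exp (u * y) := by
        have hp := Real.exp_pos (u * y / 2)
        have hsq : (u*y/2)^2 ≤ (Real.exp (u*y/2))^2 :=
          pow_le_pow_left₀ (by positivity) h1 2
        have hE : (Real.exp (u*y/2))^2 = Real.exp (u*y) := by
          rw [← Real.exp_nat_mul]; congr 1; push_cast; ring
        nlinarith
      have key2 : u^2 * (f y * Real.exp (u*y)) = u^2 * y^2 := by
        simp only [hf]
        rw [mul_assoc, ← Real.exp_add]; simp
      have h5 : u^2 * f y ≤ 4 := by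
        nlinarith [Real.exp_pos (u*y), hf0 y hy]
      have h6 : f y ≤ 4 / u^2 := by
        rw [le_div_iff₀ (by positivity : (0:ℝ) < u^2)]
        nlinarith [h5]
      exact h6.trans (le_max_right _ _)
  -- integrability of g on Ioi 0
  have hgint : IntegrableOn g (Ioi 0) ν := by
    apply levy_integrableOn hLevy measurableSet_Ioi le_rfl (by fun_prop)
      (le_trans zero_le_one (le_max_left 1 (u ^ 2))) hg0
    intro y hy
    have hy0 : 0 < y := hy
    rcases le_or_gt y 1 with h | h
    · have hmin : min 1 y = y := min_eq_right h
      rw [hmin]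
      have h2 : (u*y)^2 ≤ u^2 * y := by nlinarith
      calc g y ≤ (u*y)^2 := hgsq y hy
        _ ≤ u^2 * y := h2
        _ ≤ max 1 (u^2) * y := mul_le_mul_of_nonneg_right (le_max_right _ _) hy0.le
    · have hmin : min 1 y = 1 := min_eq_left h.le
      rw [hmin, mul_one]
      exact (hg1 y hy).trans (le_max_left _ _)
  -- integrability of y^2 on Ioc (0, 1/u)
  have hsubIoc : Ioc (0:ℝ) (1/u) ⊆ Ioi 0 := Ioc_subset_Ioi_self
  have hsq_int : IntegrableOn (fun y => y ^ 2) (Ioc 0 (1/u)) ν := by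
    apply levy_integrableOn hLevy measurableSet_Ioc hsubIoc (by fun_prop)
      (le_trans hv.le (le_max_left (1/u) ((1/u)^2))) (fun y _ => sq_nonneg y)
    intro y hy
    obtain ⟨hy0, hy1⟩ := hy
    rcases le_or_gt y 1 with h | h
    · have hmin : min 1 y = y := min_eq_right h
      rw [hmin]
      calc y^2 ≤ (1/u) * y := by nlinarith
        _ ≤ max (1/u) ((1/u)^2) * y :=
            mul_le_mul_of_nonneg_right (le_max_left _ _) hy0.le
    · have hmin : min 1 y = 1 := min_eq_left h.le
      rw [hmin, mul_one]
      calc y^2 ≤ (1/u)^2 := by nlinarith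
        _ ≤ max (1/u) ((1/u)^2) := le_max_right _ _
  -- finiteness of ν (Ioi (1/u))
  have hPfin : ν (Ioi (1/u)) ≠ ⊤ := by
    intro htop
    have hb : ∀ y ∈ Ioi (1/u), ENNReal.ofReal (min 1 (1/u)) ≤ ENNReal.ofReal (min 1 y) :=
      fun y hy => ENNReal.ofReal_le_ofReal (min_le_min le_rfl (le_of_lt hy))
    have h1 : ENNReal.ofReal (min 1 (1/u)) * ν (Ioi (1/u))
        ≤ ∫⁻ y in Ioi (1/u), ENNReal.ofReal (min 1 y) ∂ν := by
      rw [← setLIntegral_const]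
      exact setLIntegral_mono (measurable_const.min measurable_id).ennreal_ofReal hb
    have h2 : ∫⁻ y in Ioi (1/u), ENNReal.ofReal (min 1 y) ∂ν
        ≤ ∫⁻ y in Ioi (0:ℝ), ENNReal.ofReal (min 1 y) ∂ν :=
      lintegral_mono' (Measure.restrict_mono (Ioi_subset_Ioi hv.le) le_rfl) le_rfl
    have hc : ENNReal.ofReal (min 1 (1/u)) ≠ 0 := by
      simp [ENNReal.ofReal_eq_zero, not_le, lt_min_iff, hv, hu]
    rw [htop, ENNReal.mul_top hc] at h1
    exact hLevy (top_le_iff.mp (h1.trans h2))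
  -- abbreviations
  set A : ℝ := ∫ y in Ioo (0:ℝ) (1/u), y ^ 2 ∂ν with hA
  set A' : ℝ := ∫ y in Ioc (0:ℝ) (1/u), y ^ 2 ∂ν with hA'
  set P : ℝ := (ν (Ioi (1/u))).toReal with hP
  set S : ℝ := ∫ y in Ioi (0:ℝ), f y ∂ν with hS
  set Hh : ℝ := ∫ y in Ioi (0:ℝ), g y ∂ν with hHh
  have hP0 : 0 ≤ P := ENNReal.toReal_nonneg
  have hAA' : A ≤ A' :=
    setIntegral_mono_set hsq_int (ae_of_all _ fun y => sq_nonneg y)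
      (HasSubset.Subset.eventuallyLE Ioo_subset_Ioc_self)
  -- (i) e⁻¹ A' ≤ S
  have hi : Real.exp (-1) * A' ≤ S := by
    have step1 : Real.exp (-1) * A' = ∫ y in Ioc (0:ℝ) (1/u), Real.exp (-1) * y ^ 2 ∂ν := by
      rw [hA', ← integral_const_mul]
    have step2 : ∫ y in Ioc (0:ℝ) (1/u), Real.exp (-1) * y ^ 2 ∂ν
        ≤ ∫ y in Ioc (0:ℝ) (1/u), f y ∂ν := by
      apply setIntegral_mono_on (hsq_int.const_mul _)
        (hfint.mono_set hsubIoc) measurableSet_Ioc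
      intro y hy
      obtain ⟨hy0, hy1⟩ := hy
      have huy : u * y ≤ 1 := by
        calc u * y ≤ u * (1/u) := mul_le_mul_of_nonneg_left hy1 hu.le
          _ = 1 := by field_simp
      have he : Real.exp (-1) ≤ Real.exp (-(u*y)) := Real.exp_le_exp.2 (by linarith)
      simp only [hf]
      nlinarith [sq_nonneg y]
    have step3 : ∫ y in Ioc (0:ℝ) (1/u), f y ∂ν ≤ S :=
      setIntegral_mono_set hfint
        ((ae_restrict_iff' measurableSet_Ioi).2 (ae_of_all _ hf0))
        (HasSubset.Subset.eventuallyLE hsubIoc)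
    linarith [step1.le]
  -- (ii) Hh ≤ u² A' + P
  have hii : Hh ≤ u^2 * A' + P := by
    have hsplit : Hh = (∫ y in Ioc (0:ℝ) (1/u), g y ∂ν) + ∫ y in Ioi (1/u), g y ∂ν := by
      rw [hHh, ← setIntegral_union (Ioc_disjoint_Ioi le_rfl) measurableSet_Ioi
        (hgint.mono_set hsubIoc) (hgint.mono_set (Ioi_subset_Ioi hv.le)),
        Ioc_union_Ioi_eq_Ioi hv.le]
    have hpart1 : ∫ y in Ioc (0:ℝ) (1/u), g y ∂ν ≤ u^2 * A' := by
      have : ∫ y in Ioc (0:ℝ) (1/u), g y ∂ν ≤ ∫ y in Ioc (0:ℝ) (1/u), u^2 * y^2 ∂ν := by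
        apply setIntegral_mono_on (hgint.mono_set hsubIoc)
          (hsq_int.const_mul _) measurableSet_Ioc
        intro y hy
        have := hgsq y (hsubIoc hy)
        nlinarith
      rwa [integral_const_mul] at this
    have hpart2 : ∫ y in Ioi (1/u), g y ∂ν ≤ P := by
      have hconst : IntegrableOn (fun _ : ℝ => (1:ℝ)) (Ioi (1/u)) ν := by
        exact integrableOn_const hPfin
      have : ∫ y in Ioi (1/u), g y ∂ν ≤ ∫ _ in Ioi (1/u), (1:ℝ) ∂ν := by
        apply setIntegral_mono_on (hgint.mono_set (Ioi_subset_Ioi hv.le))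
          hconst measurableSet_Ioi
        intro y hy
        exact hg1 y (Ioi_subset_Ioi hv.le hy)
      rwa [setIntegral_const, smul_eq_mul, mul_one] at this
    linarith
  -- final algebra
  have hinv : ((1/u:ℝ)^2)⁻¹ = u^2 := by
    rw [one_div, inv_pow, inv_inv]
  rw [hinv] at hK ⊢
  have hKpos : 0 < u^2 * A := hK
  have hBpos : 0 < u^2 * A' := lt_of_lt_of_le hKpos (by nlinarith [sq_nonneg u])
  have hKP : 0 < u^2 * A + P := by linarith
  have h1p : 1 + P / (u^2 * A) = (u^2 * A + P) / (u^2 * A) := by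
    rw [eq_div_iff hKpos.ne', add_mul, div_mul_cancel₀ _ hKpos.ne', one_mul]
  rw [h1p, div_div_eq_mul_div, div_le_div_iff₀ hKP hH]
  have e1 : Real.exp (-1) * (u^2*A) * Hh ≤ Real.exp (-1) * (u^2*A) * (u^2*A' + P) :=
    mul_le_mul_of_nonneg_left hii (by positivity)
  have e2 : Real.exp (-1) * (u^2*A) * (u^2*A' + P)
      ≤ Real.exp (-1) * (u^2*A') * (u^2*A + P) := by
    have hnn : 0 ≤ Real.exp (-1) * u^2 * (P * (A' - A)) :=
      mul_nonneg (mul_nonneg (Real.exp_pos (-1)).le (sq_nonneg u))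
        (mul_nonneg hP0 (sub_nonneg.2 hAA'))
    have hring : Real.exp (-1) * (u^2*A') * (u^2*A + P)
        - Real.exp (-1) * (u^2*A) * (u^2*A' + P)
        = Real.exp (-1) * u^2 * (P * (A' - A)) := by ring
    linarith
  have e3 : Real.exp (-1) * (u^2*A') * (u^2*A + P) ≤ u^2 * S * (u^2*A + P) := by
    have hi2 : u^2 * (Real.exp (-1) * A') ≤ u^2 * S :=
      mul_le_mul_of_nonneg_left hi (sq_nonneg u)
    calc Real.exp (-1) * (u^2*A') * (u^2*A + P)
        = u^2 * (Real.exp (-1) * A') * (u^2*A + P) := by ring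
      _ ≤ u^2 * S * (u^2*A + P) := mul_le_mul_of_nonneg_right hi2 hKP.le
  linarith
end

section
/- For a subordinator with zero drift and Lévy measure Π, for every λ > 0: λψ'(λ)/ψ(λ) ≥ e^{-1} ∫_0^{1/λ} yΠ(dy) / ( ∫_0^{1/λ} yΠ(dy) + (2/λ)Π̄(1/λ) ). -/
open MeasureTheory Set

lemma intOn_of_bound (ν : Measure ℝ)
    (hLevy : ∫⁻ y in Ioi (0 : ℝ), ENNReal.ofReal (min 1 y) ∂ν ≠ ⊤)
    (f : ℝ → ℝ) (hf : Measurable f) {S : Set ℝ} (hS : MeasurableSet S)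
    (hSsub : S ⊆ Ioi (0:ℝ))
    (K : ℝ) (hK : 0 ≤ K)
    (hbound : ∀ y ∈ S, 0 ≤ f y ∧ f y ≤ K * min 1 y) :
    IntegrableOn f S ν := by
  refine ⟨hf.aestronglyMeasurable, ?_⟩
  unfold HasFiniteIntegral
  calc ∫⁻ y in S, ‖f y‖₊ ∂ν
      ≤ ∫⁻ y in S, ENNReal.ofReal K * ENNReal.ofReal (min 1 y) ∂ν := by
        apply setLIntegral_mono' hS
        intro y hy
        obtain ⟨h0, h1⟩ := hbound y hy
        rw [← ENNReal.ofReal_mul hK, show (‖f y‖₊ : ENNReal) = ENNReal.ofReal (f y) from Real.enorm_eq_ofReal h0]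
        exact ENNReal.ofReal_le_ofReal h1
    _ ≤ ∫⁻ y in Ioi (0:ℝ), ENNReal.ofReal K * ENNReal.ofReal (min 1 y) ∂ν :=
        lintegral_mono' (Measure.restrict_mono hSsub le_rfl) le_rfl
    _ = ENNReal.ofReal K * ∫⁻ y in Ioi (0:ℝ), ENNReal.ofReal (min 1 y) ∂ν := by
        rw [lintegral_const_mul]
        exact (measurable_const.min measurable_id).ennreal_ofReal
    _ < ⊤ := ENNReal.mul_lt_top ENNReal.ofReal_lt_top hLevy.lt_top

set_option maxHeartbeats 1000000 in
/-- For a driftless subordinator with nonzero Lévy measure ν (playing the role of Π),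
for every λ > 0:
λψ'(λ)/ψ(λ) ≥ e⁻¹ ∫₀^{1/λ} yΠ(dy) / (∫₀^{1/λ} yΠ(dy) + (2/λ)Π̄(1/λ)),
where ψ(λ) = ∫ (1-e^{-λy}) Π(dy), ψ'(λ) = ∫ y e^{-λy} Π(dy). -/
theorem psi_ratio_lower_bound (ν : Measure ℝ)
    (hsupp : ν (Iic (0 : ℝ)) = 0)
    (hLevy : ∫⁻ y in Ioi (0 : ℝ), ENNReal.ofReal (min 1 y) ∂ν ≠ ⊤)
    (hne : ν (Ioi (0 : ℝ)) ≠ 0) :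
    ∀ lam > (0 : ℝ),
      0 < (∫ y in Ioo (0 : ℝ) (1 / lam), y ∂ν) →
      Real.exp (-1) * (∫ y in Ioo (0 : ℝ) (1 / lam), y ∂ν) /
          ((∫ y in Ioo (0 : ℝ) (1 / lam), y ∂ν) + (2 / lam) * (ν (Ioi (1 / lam))).toReal)
        ≤ lam * (∫ y in Ioi (0 : ℝ), y * Real.exp (-(lam * y)) ∂ν) /
            ∫ y in Ioi (0 : ℝ), (1 - Real.exp (-(lam * y))) ∂ν := by
  intro lam hlam hI
  set c : ℝ := 1 / lam with hc
  have hc0 : 0 < c := by positivity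
  have hlc : lam * c = 1 := by rw [hc, mul_one_div_cancel hlam.ne']
  set E : ℝ := Real.exp (-1) with hE
  have hE0 : 0 < E := Real.exp_pos _
  set I : ℝ := ∫ y in Ioo (0 : ℝ) c, y ∂ν with hIdef
  set J : ℝ := ∫ y in Ioc (0 : ℝ) c, y ∂ν with hJdef
  set T : ℝ := (ν (Ioi c)).toReal with hTdef
  set ψ : ℝ := ∫ y in Ioi (0 : ℝ), (1 - Real.exp (-(lam * y))) ∂ν with hψdef
  set ψ' : ℝ := ∫ y in Ioi (0 : ℝ), y * Real.exp (-(lam * y)) ∂ν with hψ'def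
  have hT0 : 0 ≤ T := ENNReal.toReal_nonneg
  -- finiteness of ν (Ioi c)
  have hfin : ν (Ioi c) ≠ ⊤ := by
    have hmc : 0 < min 1 c := lt_min one_pos hc0
    have key : ENNReal.ofReal (min 1 c) * ν (Ioi c) ≠ ⊤ := by
      apply ne_top_of_le_ne_top hLevy
      calc ENNReal.ofReal (min 1 c) * ν (Ioi c)
          = ∫⁻ _ in Ioi c, ENNReal.ofReal (min 1 c) ∂ν := (setLIntegral_const _ _).symm
        _ ≤ ∫⁻ y in Ioi c, ENNReal.ofReal (min 1 y) ∂ν := by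
            apply setLIntegral_mono' measurableSet_Ioi
            intro y hy
            exact ENNReal.ofReal_le_ofReal (min_le_min le_rfl (le_of_lt hy))
        _ ≤ ∫⁻ y in Ioi (0:ℝ), ENNReal.ofReal (min 1 y) ∂ν :=
            lintegral_mono' (Measure.restrict_mono (Ioi_subset_Ioi hc0.le) le_rfl) le_rfl
    intro h
    rw [h, ENNReal.mul_top (ENNReal.ofReal_pos.mpr hmc).ne'] at key
    exact key rfl
  -- integrability facts
  have h_id : IntegrableOn (fun y => y) (Ioc (0:ℝ) c) ν := by
    apply intOn_of_bound ν hLevy _ measurable_id measurableSet_Ioc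
      (fun y hy => hy.1) (max 1 c) (zero_le_one.trans (le_max_left 1 c))
    intro y hy
    simp only [id_eq]
    refine ⟨hy.1.le, ?_⟩
    rcases le_total y 1 with h1 | h1
    · rw [min_eq_right h1]
      nlinarith [le_max_left 1 c, hy.1.le]
    · rw [min_eq_left h1]
      calc y ≤ c := hy.2
        _ ≤ max 1 c * 1 := by rw [mul_one]; exact le_max_right _ _
  have h_f2 : IntegrableOn (fun y => y * Real.exp (-(lam * y))) (Ioi (0:ℝ)) ν := by
    apply intOn_of_bound ν hLevy _
      (measurable_id.mul ((measurable_id.const_mul lam).neg.exp)) measurableSet_Ioi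
      (le_refl _) (max 1 (1/lam)) (zero_le_one.trans (le_max_left 1 (1/lam)))
    intro y hy
    simp only [id_eq, Pi.mul_apply, Pi.neg_apply]
    have hy0 : (0:ℝ) < y := hy
    have hexp : Real.exp (-(lam * y)) ≤ 1 := Real.exp_le_one_iff.mpr (by nlinarith)
    have hexp0 : 0 < Real.exp (-(lam * y)) := Real.exp_pos _
    refine ⟨by positivity, ?_⟩
    rcases le_total y 1 with h1 | h1
    · rw [min_eq_right h1]
      nlinarith [le_max_left 1 (1/lam), mul_le_mul_of_nonneg_left hexp hy0.le]
    · rw [min_eq_left h1]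
      have h2 : lam * y ≤ Real.exp (lam * y) := by
        nlinarith [Real.add_one_le_exp (lam * y)]
      have h3 : lam * y * Real.exp (-(lam * y)) ≤ 1 := by
        have := mul_le_mul_of_nonneg_right h2 hexp0.le
        rwa [← Real.exp_add, add_neg_cancel, Real.exp_zero] at this
      have h4 : y * Real.exp (-(lam * y)) ≤ 1 / lam := by
        rw [le_div_iff₀ hlam]
        nlinarith
      calc y * Real.exp (-(lam * y)) ≤ 1/lam := h4
        _ ≤ max 1 (1/lam) * 1 := by rw [mul_one]; exact le_max_right _ _
  have h_f3 : IntegrableOn (fun y => 1 - Real.exp (-(lam * y))) (Ioi (0:ℝ)) ν := by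
    apply intOn_of_bound ν hLevy _
      (measurable_const.sub ((measurable_id.const_mul lam).neg.exp)) measurableSet_Ioi
      (le_refl _) (max 1 lam) (zero_le_one.trans (le_max_left 1 lam))
    intro y hy
    simp only [id_eq, Pi.sub_apply, Pi.neg_apply]
    have hy0 : (0:ℝ) < y := hy
    have hexp : Real.exp (-(lam * y)) ≤ 1 := Real.exp_le_one_iff.mpr (by nlinarith)
    refine ⟨by linarith, ?_⟩
    rcases le_total y 1 with h1 | h1
    · rw [min_eq_right h1]
      nlinarith [Real.add_one_le_exp (-(lam * y)), le_max_right 1 lam, hy0.le]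
    · rw [min_eq_left h1]
      have he := Real.exp_pos (-(lam * y))
      have hm1 : (1:ℝ) ≤ max 1 lam := le_max_left 1 lam
      have := mul_le_mul_of_nonneg_left h1 (zero_le_one.trans hm1)
      linarith
  -- I ≤ J
  have hJI : I ≤ J := by
    apply setIntegral_mono_set h_id
    · exact ae_restrict_of_forall_mem measurableSet_Ioc fun y hy => hy.1.le
    · exact HasSubset.Subset.eventuallyLE Ioo_subset_Ioc_self
  have hJ0 : 0 < J := lt_of_lt_of_le hI hJI
  -- lower bound for ψ'
  have hψ'lb : E * J ≤ ψ' := by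
    have step1 : ∫ y in Ioc (0:ℝ) c, E * y ∂ν ≤ ∫ y in Ioc (0:ℝ) c, y * Real.exp (-(lam * y)) ∂ν := by
      apply setIntegral_mono_on (h_id.const_mul E) (h_f2.mono_set Ioc_subset_Ioi_self)
        measurableSet_Ioc
      intro y hy
      have h1 : lam * y ≤ 1 := by
        calc lam * y ≤ lam * c := by nlinarith [hy.2]
          _ = 1 := hlc
      have h2 : E ≤ Real.exp (-(lam * y)) := Real.exp_le_exp.mpr (by linarith)
      nlinarith [hy.1.le]
    have step2 : ∫ y in Ioc (0:ℝ) c, y * Real.exp (-(lam * y)) ∂ν ≤ ψ' := by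
      apply setIntegral_mono_set h_f2
      · refine ae_restrict_of_forall_mem measurableSet_Ioi fun y hy => ?_
        simp only [Pi.zero_apply]
        exact mul_nonneg (le_of_lt hy) (Real.exp_pos _).le
      · exact HasSubset.Subset.eventuallyLE Ioc_subset_Ioi_self
    calc E * J = ∫ y in Ioc (0:ℝ) c, E * y ∂ν := (integral_const_mul E _).symm
      _ ≤ _ := step1.trans step2
  -- lower bound for ψ
  have hψlb : E * (lam * J) ≤ ψ := by
    have step1 : ∫ y in Ioc (0:ℝ) c, (E * lam) * y ∂ν ≤ ∫ y in Ioc (0:ℝ) c, (1 - Real.exp (-(lam * y))) ∂ν := by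
      apply setIntegral_mono_on (h_id.const_mul (E * lam)) (h_f3.mono_set Ioc_subset_Ioi_self)
        measurableSet_Ioc
      intro y hy
      have h1 : lam * y ≤ 1 := by
        calc lam * y ≤ lam * c := by nlinarith [hy.2]
          _ = 1 := hlc
      have h1' : 0 < lam * y := mul_pos hlam hy.1
      have h2 : E ≤ Real.exp (-(lam * y)) := Real.exp_le_exp.mpr (by linarith)
      have h3 : lam * y * Real.exp (-(lam * y)) ≤ 1 - Real.exp (-(lam * y)) := by
        have h2' : lam * y ≤ Real.exp (lam * y) - 1 := by
          nlinarith [Real.add_one_le_exp (lam * y)]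
        have := mul_le_mul_of_nonneg_right h2' (Real.exp_pos (-(lam * y))).le
        rwa [sub_mul, ← Real.exp_add, add_neg_cancel, Real.exp_zero, one_mul] at this
      nlinarith [hy.1.le]
    have step2 : ∫ y in Ioc (0:ℝ) c, (1 - Real.exp (-(lam * y))) ∂ν ≤ ψ := by
      apply setIntegral_mono_set h_f3
      · refine ae_restrict_of_forall_mem measurableSet_Ioi fun y hy => ?_
        simp only [Pi.zero_apply]
        have : Real.exp (-(lam * y)) ≤ 1 := Real.exp_le_one_iff.mpr (by nlinarith [mem_Ioi.mp hy])
        linarith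
      · exact HasSubset.Subset.eventuallyLE Ioc_subset_Ioi_self
    calc E * (lam * J) = ∫ y in Ioc (0:ℝ) c, (E * lam) * y ∂ν := by
          rw [integral_const_mul]; ring
      _ ≤ _ := step1.trans step2
  have hψ0 : 0 < ψ := lt_of_lt_of_le (mul_pos hE0 (mul_pos hlam hJ0)) hψlb
  -- upper bound for ψ
  have hψub : ψ ≤ lam * J + T := by
    have hsplit : ψ = (∫ y in Ioc (0:ℝ) c, (1 - Real.exp (-(lam * y))) ∂ν)
        + ∫ y in Ioi c, (1 - Real.exp (-(lam * y))) ∂ν := by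
      rw [hψdef, ← setIntegral_union (Ioc_disjoint_Ioi le_rfl) measurableSet_Ioi
        (h_f3.mono_set Ioc_subset_Ioi_self)
        (h_f3.mono_set (Ioi_subset_Ioi hc0.le)), Ioc_union_Ioi_eq_Ioi hc0.le]
    have hb1 : ∫ y in Ioc (0:ℝ) c, (1 - Real.exp (-(lam * y))) ∂ν ≤ lam * J := by
      rw [hJdef, ← integral_const_mul]
      apply setIntegral_mono_on (h_f3.mono_set Ioc_subset_Ioi_self) (h_id.const_mul lam)
        measurableSet_Ioc
      intro y hy
      nlinarith [Real.add_one_le_exp (-(lam * y))]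
    have hb2 : ∫ y in Ioi c, (1 - Real.exp (-(lam * y))) ∂ν ≤ T := by
      have hconst : IntegrableOn (fun _ : ℝ => (1:ℝ)) (Ioi c) ν :=
        integrableOn_const hfin
      calc ∫ y in Ioi c, (1 - Real.exp (-(lam * y))) ∂ν
          ≤ ∫ _ in Ioi c, (1:ℝ) ∂ν := by
            apply setIntegral_mono_on (h_f3.mono_set (Ioi_subset_Ioi hc0.le)) hconst
              measurableSet_Ioi
            intro y hy
            nlinarith [Real.exp_pos (-(lam * y))]
        _ = T := by rw [setIntegral_const, smul_eq_mul, mul_one, measureReal_def]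
    linarith [hsplit, hb1, hb2]
  -- conclusion
  clear_value c E I J T ψ ψ'
  have hnum : E * (lam * J) ≤ lam * ψ' := by
    calc E * (lam * J) = lam * (E * J) := by ring
      _ ≤ lam * ψ' := mul_le_mul_of_nonneg_left hψ'lb hlam.le
  have h2T0 : 0 ≤ 2 / lam * T := mul_nonneg (by positivity) hT0
  have hden1 : 0 < I + 2 / lam * T := by linarith
  have hden2 : 0 < lam * J + T := by nlinarith [mul_pos hlam hJ0]
  have hnum0 : (0:ℝ) ≤ lam * ψ' := le_trans (mul_nonneg hE0.le (mul_pos hlam hJ0).le) hnum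
  calc E * I / (I + 2 / lam * T)
      ≤ E * (lam * J) / (lam * J + T) := by
        rw [div_le_div_iff₀ hden1 hden2]
        have h5 : E * (lam * J) * (2 / lam * T) = 2 * (E * (J * T)) := by
          field_simp
        have q : E * (I * T) ≤ E * (J * T) :=
          mul_le_mul_of_nonneg_left (mul_le_mul_of_nonneg_right hJI hT0) hE0.le
        have r : 0 ≤ E * (J * T) := mul_nonneg hE0.le (mul_nonneg hJ0.le hT0)
        nlinarith [q, r, h5]
    _ ≤ lam * ψ' / ψ := div_le_div₀ hnum0 hnum hψ0 hψub
end
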